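/- Let G be a K_{2,3}-saturated graph, α a vertex, V₁ = N[α] ∪ {v : |N(v) ∩ N(α)| = 2}, U₂ the set of vertices outside V₁ with exactly one neighbor in N(α), and U₃ = V \ (V₁ ∪ U₂). Then every z ∈ U₃ satisfies |N(z) ∩ (V \ U₃)| ≥ 1 + |{x ∈ N(α) : N(z) ∩ N(x) ∩ U₂ ≠ ∅}|. -/

import Mathlib

open SimpleGraph

/-- `G` contains a subgraph isomorphic to the complete bipartite graph `K_{2,3}`. -/
def HasK23 {V : Type*} (G : SimpleGraph V) : Prop :=
  ∃ f : (Fin 2 ⊕ Fin 3) ↪ V,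
    ∀ a b, (completeBipartiteGraph (Fin 2) (Fin 3)).Adj a b → G.Adj (f a) (f b)

/-- `G` is `K_{2,3}`-saturated: `K_{2,3}`-free, but adding any edge between two
non-adjacent vertices creates a `K_{2,3}`. -/
def K23Saturated {V : Type*} (G : SimpleGraph V) : Prop :=
  ¬ HasK23 G ∧ ∀ u v : V, u ≠ v → ¬ G.Adj u v →
    HasK23 (G ⊔ SimpleGraph.fromEdgeSet {s(u, v)})


/-! Write `N` for neighbourhoods. A vertex `z ∈ U₃` is neither `α` nor adjacent to it, and, since
`K_{2,3}`-freeness caps common neighbourhoods at two vertices, no vertex with a neighbour in `N(α)`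
lies in `U₃`. Every `x` counted on the left has a neighbour `w x ∈ N(z) ∩ U₂`, and `x` is the only
neighbour of `w x` in `N(α)`, so `w` is injective with image in `N(z) \ U₃`. The extra `1` comes
from saturation: adding `zα` creates a `K_{2,3}` containing the new edge. Either some `c ∈ N(α)`
has two common neighbours with `z`, which cannot both be `w c`; or some `c ∈ N(z)` has two
neighbours in `N(α)`, so `c ∈ V₁` is not in the image of `w`. -/

section K23

variable {V : Type*} {G : SimpleGraph V}

lemma hasK23_of_adj {u v a b c : V} (huv : u ≠ v) (hab : a ≠ b) (hac : a ≠ c) (hbc : b ≠ c)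
    (hua : G.Adj u a) (hub : G.Adj u b) (huc : G.Adj u c)
    (hva : G.Adj v a) (hvb : G.Adj v b) (hvc : G.Adj v c) : HasK23 G := by
  refine ⟨⟨Sum.elim ![u, v] ![a, b, c], ?_⟩, ?_⟩
  · refine Function.Injective.sumElim ?_ ?_ ?_
    · intro i j; fin_cases i <;> fin_cases j <;> simp [huv, huv.symm]
    · intro i j; fin_cases i <;> fin_cases j <;> simp [hab, hac, hbc, hab.symm, hac.symm, hbc.symm]
    · intro i j; fin_cases i <;> fin_cases j
      exacts [hua.ne, hub.ne, huc.ne, hva.ne, hvb.ne, hvc.ne]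
  · rintro (i | i) (j | j) (⟨⟨⟩, ⟨⟩⟩ | ⟨⟨⟩, ⟨⟩⟩) <;> fin_cases i <;> fin_cases j
    exacts [hua, hub, huc, hva, hvb, hvc,
      hua.symm, hva.symm, hub.symm, hvb.symm, huc.symm, hvc.symm]

lemma ncard_neighborSet_inter_le_two (hG : ¬HasK23 G) {u v : V} (huv : u ≠ v) :
    (G.neighborSet u ∩ G.neighborSet v).ncard ≤ 2 := by
  by_contra! h
  obtain ⟨a, ha, b, hb, c, hc, hab, hac, hbc⟩ :=
    (Set.two_lt_ncard (Set.finite_of_ncard_pos (by omega))).1 h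
  exact hG (hasK23_of_adj huv hab hac hbc ha.1 hb.1 hc.1 ha.2 hb.2 hc.2)

lemma adj_of_sup_edge_adj {u v x y : V} (h : (G ⊔ edge u v).Adj x y)
    (hne : s(x, y) ≠ s(u, v)) : G.Adj x y := by
  refine h.resolve_right fun he ↦ hne ?_
  rcases ((edge_adj u v x y).1 he).1 with ⟨rfl, rfl⟩ | ⟨rfl, rfl⟩
  exacts [rfl, Sym2.eq_swap]

lemma exists_of_hasK23_sup_edge (hG : ¬HasK23 G) {u v : V}
    (h : HasK23 (G ⊔ edge u v)) :
    ∃ x y, s(x, y) = s(u, v) ∧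
      ∃ c d e, d ≠ e ∧ G.Adj y c ∧ G.Adj c d ∧ G.Adj c e ∧ G.Adj x d ∧ G.Adj x e := by
  obtain ⟨f, hf⟩ := h
  have hH : ∀ i j, (G ⊔ edge u v).Adj (f (.inl i)) (f (.inr j)) := fun i j ↦ hf _ _ (by simp)
  obtain ⟨i, j, hij⟩ : ∃ i j, ¬G.Adj (f (.inl i)) (f (.inr j)) := by
    by_contra! hall
    refine hG ⟨f, ?_⟩
    rintro (i | i) (j | j) (⟨⟨⟩, ⟨⟩⟩ | ⟨⟨⟩, ⟨⟩⟩)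
    exacts [hall i j, (hall j i).symm]
  have huv : s(f (.inl i), f (.inr j)) = s(u, v) := by
    by_contra hne
    exact hij (adj_of_sup_edge_adj (hH i j) hne)
  have hG' : ∀ i' j', i' ≠ i ∨ j' ≠ j → G.Adj (f (.inl i')) (f (.inr j')) := fun i' j' hne ↦
    adj_of_sup_edge_adj (hH i' j') <| huv ▸ by
      simpa [Sym2.eq_iff, f.injective.eq_iff, or_iff_not_imp_left] using hne
  have hi : i + 1 ≠ i := by fin_cases i <;> decide
  have hj : j + 1 ≠ j ∧ j + 2 ≠ j ∧ j + 1 ≠ j + 2 := by fin_cases j <;> decide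
  exact ⟨_, _, huv, f (.inl (i + 1)), f (.inr (j + 1)), f (.inr (j + 2)),
    f.injective.ne (Sum.inr_injective.ne hj.2.2), (hG' _ _ (.inl hi)).symm, hG' _ _ (.inl hi),
    hG' _ _ (.inl hi), hG' _ _ (.inr hj.1), hG' _ _ (.inr hj.2.1)⟩

variable (G) (α : V)

-- The sets `V₁`, `U₂`, `U₃` of the statement.
def innerLayer : Set V :=
  insert α (G.neighborSet α) ∪ {v | (G.neighborSet v ∩ G.neighborSet α).ncard = 2}

def pendantLayer : Set V :=
  {v | v ∉ innerLayer G α ∧ (G.neighborSet v ∩ G.neighborSet α).ncard = 1}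

def outerLayer : Set V := Set.univ \ (innerLayer G α ∪ pendantLayer G α)

variable {G α}

lemma ne_and_not_adj_of_mem_outerLayer {z : V} (hz : z ∈ outerLayer G α) :
    z ≠ α ∧ ¬G.Adj z α := by
  simp only [outerLayer, innerLayer, Set.mem_sdiff, Set.mem_union, Set.mem_insert_iff] at hz
  exact ⟨fun h ↦ hz.2 (.inl (.inl (.inl h))), fun h ↦ hz.2 (.inl (.inl (.inr h.symm)))⟩

lemma notMem_outerLayer_of_mem_pendantLayer {u : V} (hu : u ∈ pendantLayer G α) :
    u ∉ outerLayer G α :=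
  fun h ↦ h.2 (.inr hu)

lemma notMem_outerLayer_of_adj_of_adj [Finite V] (hG : ¬HasK23 G) {u x : V}
    (hux : G.Adj u x) (hαx : G.Adj α x) : u ∉ outerLayer G α := by
  rintro ⟨-, hu⟩
  obtain rfl | huα := eq_or_ne u α
  · exact hu (.inl (.inl (Set.mem_insert u _)))
  have hpos : 0 < (G.neighborSet u ∩ G.neighborSet α).ncard :=
    (Set.ncard_pos).2 ⟨x, hux, hαx⟩
  have hle := ncard_neighborSet_inter_le_two hG huα
  obtain h | h : (G.neighborSet u ∩ G.neighborSet α).ncard = 1 ∨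
      (G.neighborSet u ∩ G.neighborSet α).ncard = 2 := by omega
  · exact hu (.inr ⟨fun h' ↦ hu (.inl h'), h⟩)
  · exact hu (.inl (.inr h))

lemma eq_of_adj_of_mem_pendantLayer {u x y : V} (hu : u ∈ pendantLayer G α)
    (hux : G.Adj u x) (hαx : G.Adj α x) (huy : G.Adj u y) (hαy : G.Adj α y) : x = y := by
  obtain ⟨a, ha⟩ := Set.ncard_eq_one.1 hu.2
  have hx : x ∈ G.neighborSet u ∩ G.neighborSet α := ⟨hux, hαx⟩
  have hy : y ∈ G.neighborSet u ∩ G.neighborSet α := ⟨huy, hαy⟩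
  rw [ha, Set.mem_singleton_iff] at hx hy
  rw [hx, hy]

lemma exists_adj_notMem_outerLayer_notMem_image [Finite V] (hG : K23Saturated G) {z : V}
    (hz : z ∈ outerLayer G α) {S : Set V} {w : V → V}
    (hw : ∀ x ∈ S, G.Adj α x ∧ G.Adj x (w x) ∧ w x ∈ pendantLayer G α) :
    ∃ t ∈ G.neighborSet z \ outerLayer G α, t ∉ w '' S := by
  obtain ⟨hzα, hnadj⟩ := ne_and_not_adj_of_mem_outerLayer hz
  obtain ⟨x, y, hxy, c, d, e, hde, hyc, hcd, hce, hxd, hxe⟩ :=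
    exists_of_hasK23_sup_edge hG.1 (hG.2 z α hzα hnadj)
  rcases Sym2.eq_iff.1 hxy with ⟨rfl, rfl⟩ | ⟨rfl, rfl⟩
  · -- `c ∈ N(α)` has the two common neighbours `d, e` with `z`
    have hw_eq : ∀ t, G.Adj c t → t ∈ w '' S → t = w c := by
      rintro t hct ⟨x', hx', rfl⟩
      obtain ⟨hαx', hx'w, hw'⟩ := hw x' hx'
      rw [eq_of_adj_of_mem_pendantLayer hw' hx'w.symm hαx' hct.symm hyc]
    by_cases hd : d ∈ w '' S
    · refine ⟨e, ⟨hxe, notMem_outerLayer_of_adj_of_adj hG.1 hce.symm hyc⟩, fun he ↦ hde ?_⟩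
      rw [hw_eq d hcd hd, hw_eq e hce he]
    · exact ⟨d, ⟨hxd, notMem_outerLayer_of_adj_of_adj hG.1 hcd.symm hyc⟩, hd⟩
  · -- `c ∈ N(z)` has the two neighbours `d, e` in `N(α)`
    refine ⟨c, ⟨hyc, notMem_outerLayer_of_adj_of_adj hG.1 hcd hxd⟩, ?_⟩
    rintro ⟨x', hx', rfl⟩
    exact hde (eq_of_adj_of_mem_pendantLayer (hw x' hx').2.2 hcd hxd hce hxe)

end K23

theorem U3_vertex_edge_bound {V : Type*} [Fintype V]
    (G : SimpleGraph V) (hG : K23Saturated G) (α : V)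
    (V₁ U₂ U₃ : Set V)
    (hV₁ : V₁ = insert α (G.neighborSet α) ∪
      {v | (G.neighborSet v ∩ G.neighborSet α).ncard = 2})
    (hU₂ : U₂ = {v | v ∉ V₁ ∧ (G.neighborSet v ∩ G.neighborSet α).ncard = 1})
    (hU₃ : U₃ = Set.univ \ (V₁ ∪ U₂)) :
    ∀ z ∈ U₃,
      1 + {x ∈ G.neighborSet α |
            (G.neighborSet z ∩ G.neighborSet x ∩ U₂).Nonempty}.ncard
        ≤ (G.neighborSet z \ U₃).ncard := by
  obtain rfl : V₁ = innerLayer G α := hV₁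
  obtain rfl : U₂ = pendantLayer G α := hU₂
  obtain rfl : U₃ = outerLayer G α := hU₃
  intro z hz
  set S := {x ∈ G.neighborSet α | (G.neighborSet z ∩ G.neighborSet x ∩ pendantLayer G α).Nonempty}
  choose! w hw using fun x (hx : x ∈ S) ↦ hx.2
  have hinj : Set.InjOn w S := fun x hx y hy hxy ↦
    eq_of_adj_of_mem_pendantLayer (hw x hx).2 (hw x hx).1.2.symm hx.1
      (hxy ▸ (hw y hy).1.2.symm) hy.1
  obtain ⟨t, ht, htS⟩ := exists_adj_notMem_outerLayer_notMem_image hG hz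
    fun x hx ↦ ⟨hx.1, (hw x hx).1.2, (hw x hx).2⟩
  have hsub : insert t (w '' S) ⊆ G.neighborSet z \ outerLayer G α :=
    Set.insert_subset ht <| Set.image_subset_iff.2 fun x hx ↦
      ⟨(hw x hx).1.1, notMem_outerLayer_of_mem_pendantLayer (hw x hx).2⟩
  calc 1 + S.ncard = (insert t (w '' S)).ncard := by
        rw [Set.ncard_insert_of_notMem htS, hinj.ncard_image, add_comm]
    _ ≤ _ := Set.ncard_le_ncard hsub
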